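/- For α ∈ ℂ* let W(α) = {(x,y,z,w) ∈ ℂ⁴ : x + αz = 0, y − α⁻¹w = 0} and W'(β) = {(x,y,z,w) ∈ ℂ⁴ : x + βw = 0, y − β⁻¹z = 0} for β ∈ ℂ*, which are 2-dimensional subspaces of ℂ⁴. Then for all nonzero α, α', β, β' ∈ ℂ: (a) W(α) ∩ W(α') = {0} if and only if α ≠ α', and likewise W'(β) ∩ W'(β') = {0} iff β ≠ β'; and (b) dim_ℂ (W(α) ∩ W'(β)) = 1 for every α, β. Consequently, the eight lines on X_{A,B,C,D,E} ∩ Q₆ (given by the four roots of At⁴+Dt²+A and the four roots of At⁴+Et²+A, when A ≠ 0, AB−2AC+DE = 0, D² ≠ 4A², E² ≠ 4A²) form two sets of four pairwise skew lines, and each line from one set intersects each of the four lines in the other set. -/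

import Mathlib

/-- For `α ∈ ℂ*`, the subspace `W(α) = {(x,y,z,w) ∈ ℂ⁴ : x + αz = 0, y − α⁻¹w = 0}`. -/
noncomputable def lineW (α : ℂ) : Submodule ℂ (Fin 4 → ℂ) where
  carrier := {p | p 0 + α * p 2 = 0 ∧ p 1 - α⁻¹ * p 3 = 0}
  add_mem' := by
    rintro a b ⟨ha1, ha2⟩ ⟨hb1, hb2⟩
    refine ⟨?_, ?_⟩ <;> simp only [Pi.add_apply]
    · linear_combination ha1 + hb1
    · linear_combination ha2 + hb2
  zero_mem' := by simp
  smul_mem' := by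
    rintro c p ⟨h1, h2⟩
    refine ⟨?_, ?_⟩ <;> simp only [Pi.smul_apply, smul_eq_mul]
    · linear_combination c * h1
    · linear_combination c * h2

/-- For `β ∈ ℂ*`, the subspace `W'(β) = {(x,y,z,w) ∈ ℂ⁴ : x + βw = 0, y − β⁻¹z = 0}`. -/
noncomputable def lineW' (β : ℂ) : Submodule ℂ (Fin 4 → ℂ) where
  carrier := {p | p 0 + β * p 3 = 0 ∧ p 1 - β⁻¹ * p 2 = 0}
  add_mem' := by
    rintro a b ⟨ha1, ha2⟩ ⟨hb1, hb2⟩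
    refine ⟨?_, ?_⟩ <;> simp only [Pi.add_apply]
    · linear_combination ha1 + hb1
    · linear_combination ha2 + hb2
  zero_mem' := by simp
  smul_mem' := by
    rintro c p ⟨h1, h2⟩
    refine ⟨?_, ?_⟩ <;> simp only [Pi.smul_apply, smul_eq_mul]
    · linear_combination c * h1
    · linear_combination c * h2

/-!
`W(α)` is the graph, over the `(z, w)`-coordinates, of `diag(-α, α⁻¹)`, so two such graphs meet
only where the two diagonal maps agree, which is nowhere but `0` once `α ≠ α'`. `W'(β)` is `W(β)`
with `z` and `w` swapped, so it inherits these properties. Finally `W(α) ∩ W'(β)` is the line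
spanned by `(-αβ, 1, β, α)`: the two equations for `y` force `w = αy` and `z = βy`.
-/

theorem mem_lineW {α : ℂ} {p : Fin 4 → ℂ} :
    p ∈ lineW α ↔ p 0 + α * p 2 = 0 ∧ p 1 - α⁻¹ * p 3 = 0 := Iff.rfl

theorem mem_lineW' {β : ℂ} {p : Fin 4 → ℂ} :
    p ∈ lineW' β ↔ p 0 + β * p 3 = 0 ∧ p 1 - β⁻¹ * p 2 = 0 := Iff.rfl

theorem lineW_eq_span (α : ℂ) :
    lineW α = Submodule.span ℂ {![-α, 0, 1, 0], ![0, α⁻¹, 0, 1]} := by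
  apply le_antisymm
  · intro p ⟨h0, h1⟩
    refine Submodule.mem_span_pair.2 ⟨p 2, p 3, funext fun i => ?_⟩
    fin_cases i <;> simp
    · linear_combination -h0
    · linear_combination -h1
  · rw [Submodule.span_le, Set.insert_subset_iff, Set.singleton_subset_iff]
    exact ⟨⟨by simp, by simp⟩, ⟨by simp, by simp⟩⟩

theorem finrank_lineW (α : ℂ) : Module.finrank ℂ (lineW α) = 2 := by
  have hli : LinearIndependent ℂ ![![-α, 0, 1, 0], ![0, α⁻¹, 0, 1]] := by
    refine LinearIndependent.pair_iff.2 fun s t hst => ⟨?_, ?_⟩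
    · simpa using congrFun hst 2
    · simpa using congrFun hst 3
  rw [lineW_eq_span, ← Matrix.range_cons_cons_empty _ _ ![], finrank_span_eq_card hli,
    Fintype.card_fin]

theorem lineW_inf_lineW_eq_bot_iff {α α' : ℂ} : lineW α ⊓ lineW α' = ⊥ ↔ α ≠ α' := by
  constructor
  · rintro h rfl
    rw [inf_idem] at h
    exact absurd (finrank_lineW α) (by rw [h, finrank_bot]; norm_num)
  · intro hne
    refine eq_bot_iff.2 fun p ⟨⟨h0, h1⟩, ⟨h0', h1'⟩⟩ => (Submodule.mem_bot ℂ).2 ?_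
    have hz : p 2 = 0 := by
      have : (α - α') * p 2 = 0 := by linear_combination h0 - h0'
      exact (mul_eq_zero.1 this).resolve_left (sub_ne_zero.2 hne)
    have hw : p 3 = 0 := by
      have : (α⁻¹ - α'⁻¹) * p 3 = 0 := by linear_combination h1' - h1
      exact (mul_eq_zero.1 this).resolve_left (sub_ne_zero.2 (inv_injective.ne hne))
    funext i
    fin_cases i
    · simpa [hz] using h0
    · simpa [hw] using h1
    · exact hz
    · exact hw

def swapZW : (Fin 4 → ℂ) ≃ₗ[ℂ] (Fin 4 → ℂ) := LinearEquiv.funCongrLeft ℂ ℂ (Equiv.swap 2 3)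

theorem lineW'_eq_map_swapZW (β : ℂ) :
    lineW' β = (lineW β).map (swapZW : (Fin 4 → ℂ) →ₗ[ℂ] Fin 4 → ℂ) := by
  ext p
  rw [Submodule.mem_map_equiv]
  simp [mem_lineW, mem_lineW', swapZW, LinearEquiv.funCongrLeft_apply,
    Equiv.swap_apply_of_ne_of_ne]

theorem finrank_lineW' (β : ℂ) : Module.finrank ℂ (lineW' β) = 2 := by
  rw [lineW'_eq_map_swapZW, LinearEquiv.finrank_map_eq, finrank_lineW]

theorem lineW'_inf_lineW'_eq_bot_iff {β β' : ℂ} : lineW' β ⊓ lineW' β' = ⊥ ↔ β ≠ β' := by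
  rw [lineW'_eq_map_swapZW, lineW'_eq_map_swapZW, ← Submodule.map_inf _ swapZW.injective,
    Submodule.map_eq_bot_iff, lineW_inf_lineW_eq_bot_iff]

theorem lineW_inf_lineW'_eq_span {α β : ℂ} (hα : α ≠ 0) (hβ : β ≠ 0) :
    lineW α ⊓ lineW' β = ℂ ∙ ![-α * β, 1, β, α] := by
  apply le_antisymm
  · rintro p ⟨⟨h0, h1⟩, ⟨h0', h1'⟩⟩
    have hw : p 3 = α * p 1 := by field_simp at h1; linear_combination -h1
    have hz : p 2 = β * p 1 := by field_simp at h1'; linear_combination -h1'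
    refine Submodule.mem_span_singleton.2 ⟨p 1, funext fun i => ?_⟩
    fin_cases i <;> simp
    · linear_combination -h0 + α * hz
    · linear_combination -hz
    · linear_combination -hw
  · rw [Submodule.span_le, Set.singleton_subset_iff]
    exact ⟨⟨by simp, by simp [hα]⟩, ⟨by simp; ring, by simp [hβ]⟩⟩

theorem finrank_lineW_inf_lineW' {α β : ℂ} (hα : α ≠ 0) (hβ : β ≠ 0) :
    Module.finrank ℂ ↥(lineW α ⊓ lineW' β) = 1 := by
  rw [lineW_inf_lineW'_eq_span hα hβ]
  exact finrank_span_singleton fun h => by simpa using congrFun h 1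

theorem lines_skew_and_meet_general (α α' β β' : ℂ) (hα : α ≠ 0) (hβ : β ≠ 0) :
    Module.finrank ℂ (lineW α) = 2 ∧ Module.finrank ℂ (lineW' β) = 2 ∧
      (lineW α ⊓ lineW α' = ⊥ ↔ α ≠ α') ∧
      (lineW' β ⊓ lineW' β' = ⊥ ↔ β ≠ β') ∧
      Module.finrank ℂ ↥(lineW α ⊓ lineW' β) = 1 :=
  ⟨finrank_lineW α, finrank_lineW' β, lineW_inf_lineW_eq_bot_iff, lineW'_inf_lineW'_eq_bot_iff,
    finrank_lineW_inf_lineW' hα hβ⟩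

/-- The `W(α)` and `W'(β)` are 2-dimensional subspaces of `ℂ⁴`; two lines of the same
ruling are skew (they meet only in `0`) iff their parameters differ, and any line of one
ruling meets any line of the other ruling in a 1-dimensional subspace. Consequently the
eight lines on `X_{A,B,C,D,E} ∩ Q₆` form two sets of four pairwise skew lines, and each
line from one set intersects each of the four lines in the other set. -/
theorem lines_skew_and_meet (α α' β β' : ℂ) (hα : α ≠ 0) (hα' : α' ≠ 0)
    (hβ : β ≠ 0) (hβ' : β' ≠ 0) :
    Module.finrank ℂ (lineW α) = 2 ∧ Module.finrank ℂ (lineW' β) = 2 ∧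
      (lineW α ⊓ lineW α' = ⊥ ↔ α ≠ α') ∧
      (lineW' β ⊓ lineW' β' = ⊥ ↔ β ≠ β') ∧
      Module.finrank ℂ ↥(lineW α ⊓ lineW' β) = 1 :=
  lines_skew_and_meet_general α α' β β' hα hβ
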